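/- (One-dimensional Laguerre identity.) Let n = 1 and a > 0, with Bergman kernel 𝒫(Z,Z′) = (a/(2π)) exp(−(a/4)(|z|² + |z′|² − 2 z conj(z′))) on ℝ² × ℝ². For all integers l ≥ l′ ≥ 0 and all Z, Z′, applying b l times in the first variable Z and b̄ l′ times in the second variable Z′ to 𝒫 gives b^l_Z b̄^{l′}_{Z′} 𝒫(Z,Z′) = 2^{l′} a^{l} l′! (z̄ − conj(z′))^{l−l′} L^{(l−l′)}_{l′}( a|z−z′|²/2 ) 𝒫(Z,Z′). In particular, on the diagonal Z = Z′: b^l_Z b̄^{l′}_{Z′} 𝒫(Z,Z) = 2^{l} a^{l} l! 𝒫(0,0) if l = l′, and = 0 if l ≠ l′. -/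

import Mathlib

open Complex

noncomputable section

/-- Wirtinger derivative `∂/∂z` on `ℂ ≅ ℝ²`. -/
def wdz1 (u : ℂ → ℂ) (z : ℂ) : ℂ :=
  (1 / 2 : ℂ) * (fderiv ℝ u z 1 - Complex.I * fderiv ℝ u z Complex.I)

/-- Wirtinger derivative `∂/∂z̄` on `ℂ ≅ ℝ²`. -/
def wdzbar1 (u : ℂ → ℂ) (z : ℂ) : ℂ :=
  (1 / 2 : ℂ) * (fderiv ℝ u z 1 + Complex.I * fderiv ℝ u z Complex.I)

/-- The operator `b = -2 ∂/∂z + (1/2) a z̄`. -/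
def opb1 (a : ℝ) (u : ℂ → ℂ) (z : ℂ) : ℂ :=
  -2 * wdz1 u z + (1 / 2 : ℂ) * (a : ℂ) * (starRingEnd ℂ) z * u z

/-- The operator `b̄ = -2 ∂/∂z̄ + (1/2) a z`. -/
def opbbar1 (a : ℝ) (u : ℂ → ℂ) (z : ℂ) : ℂ :=
  -2 * wdzbar1 u z + (1 / 2 : ℂ) * (a : ℂ) * z * u z

/-- The one-dimensional Bergman kernel. -/
def berg1 (a : ℝ) (z z' : ℂ) : ℂ :=
  ((a / (2 * Real.pi) : ℝ) : ℂ) *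
    Complex.exp (-((a : ℂ) / 4) * (((‖z‖ ^ 2 : ℝ) : ℂ) + ((‖z'‖ ^ 2 : ℝ) : ℂ)
      - 2 * z * (starRingEnd ℂ) z'))

/-- Generalized Laguerre polynomial `L^{(m)}_k`. -/
def laguerre (m k : ℕ) (x : ℂ) : ℂ :=
  ∑ j ∈ Finset.range (k + 1), (Nat.choose (k + m) (k - j) : ℂ) * (-x) ^ j / (Nat.factorial j : ℂ)

/-!
Write `u = w - z'`. Conjugating by the kernel, `b` acts on `q(u, ū) 𝒫(·, z')` as the operator
`-2 ∂_u + a ū` on the polynomial `q`. Its two summands commute, so the binomial theorem computes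
`(-2 ∂_u + a ū)^l u^{l'}` term by term, and the resulting sum is the Laguerre polynomial.
The kernel is Hermitian and `b̄` is the complex conjugate of `b`, so the same computation with
`q = 1` gives `b̄^{l'}_{Z'} 𝒫(Z, Z') = a^{l'} (z' - z)^{l'} 𝒫(Z, Z')`.
-/

open MvPolynomial ComplexConjugate

theorem fderiv_real_apply_eq_deriv_mul {h : ℂ → ℂ} {y : ℂ} (hh : DifferentiableAt ℂ h y)
    (v : ℂ) : fderiv ℝ h y v = deriv h y * v := by
  rw [(hh.hasDerivAt.hasFDerivAt.restrictScalars ℝ).fderiv]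
  simp [mul_comm]

section Wirtinger

variable {f g : ℂ → ℂ} {y : ℂ}

theorem wdz1_add (hf : DifferentiableAt ℝ f y) (hg : DifferentiableAt ℝ g y) :
    wdz1 (fun w => f w + g w) y = wdz1 f y + wdz1 g y := by
  simp only [wdz1, fderiv_fun_add hf hg, add_apply]
  ring

theorem wdz1_mul (hf : DifferentiableAt ℝ f y) (hg : DifferentiableAt ℝ g y) :
    wdz1 (fun w => f w * g w) y = wdz1 f y * g y + f y * wdz1 g y := by
  simp only [wdz1, fderiv_fun_mul hf hg, add_apply, smul_apply, smul_eq_mul]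
  ring

theorem wdz1_const (c : ℂ) : wdz1 (fun _ => c) y = 0 := by
  simp [wdz1]

theorem wdz1_comp {h : ℂ → ℂ} (hh : DifferentiableAt ℂ h (f y))
    (hf : DifferentiableAt ℝ f y) :
    wdz1 (fun w => h (f w)) y = deriv h (f y) * wdz1 f y := by
  simp only [wdz1, fderiv_fun_comp y (hh.restrictScalars ℝ) hf, ContinuousLinearMap.coe_comp,
    Function.comp_apply, fderiv_real_apply_eq_deriv_mul hh]
  ring

theorem wdz1_sub_const (c : ℂ) : wdz1 (fun w => w - c) y = 1 := by
  simp [wdz1, fderiv_sub_const]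
  norm_num

theorem wdz1_conj_sub_const (c : ℂ) : wdz1 (fun w => conj (w - c)) y = 0 := by
  have : HasFDerivAt (fun w => conj (w - c)) (conjCLE : ℂ →L[ℝ] ℂ) y :=
    conjCLE.hasFDerivAt.comp y ((hasFDerivAt_id y).sub_const c)
  rw [wdz1, this.fderiv]
  simp

theorem wdzbar1_conj (f : ℂ → ℂ) (y : ℂ) :
    wdzbar1 (fun w => conj (f w)) y = conj (wdz1 f y) := by
  rw [wdzbar1, wdz1, show (fun w => conj (f w)) = (conjCLE : ℂ → ℂ) ∘ f from rfl,
    conjCLE.comp_fderiv]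
  simp [map_ofNat]

theorem opbbar1_conj (a : ℝ) (f : ℂ → ℂ) :
    opbbar1 a (fun w => conj (f w)) = fun w => conj (opb1 a f w) := by
  funext w
  simp [opbbar1, opb1, wdzbar1_conj, map_ofNat]

theorem iterate_opbbar1_conj (a : ℝ) (f : ℂ → ℂ) (k : ℕ) :
    (opbbar1 a)^[k] (fun w => conj (f w)) = fun w => conj ((opb1 a)^[k] f w) := by
  induction k with
  | zero => rfl
  | succ k ih => rw [Function.iterate_succ_apply', ih, opbbar1_conj, Function.iterate_succ_apply']

end Wirtinger

section PolynomialChainRule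

variable {σ : Type*} {F : σ → ℂ → ℂ} {y : ℂ}

theorem differentiableAt_eval_comp (hF : ∀ i, DifferentiableAt ℝ (F i) y)
    (q : MvPolynomial σ ℂ) : DifferentiableAt ℝ (fun w => eval (fun i => F i w) q) y := by
  induction q using MvPolynomial.induction_on with
  | C c => simp
  | add p q hp hq => simpa using hp.fun_add hq
  | mul_X p i hp => simpa using hp.fun_mul (hF i)

theorem wdz1_eval_comp [Fintype σ] (hF : ∀ i, DifferentiableAt ℝ (F i) y)
    (q : MvPolynomial σ ℂ) :
    wdz1 (fun w => eval (fun i => F i w) q) y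
      = ∑ i, eval (fun i => F i y) (pderiv i q) * wdz1 (F i) y := by
  classical
  induction q using MvPolynomial.induction_on with
  | C c => simp [wdz1_const]
  | add p q hp hq =>
    simp only [map_add]
    rw [wdz1_add (differentiableAt_eval_comp hF p) (differentiableAt_eval_comp hF q), hp, hq]
    simp [add_mul, Finset.sum_add_distrib]
  | mul_X p j hp =>
    simp only [map_mul, eval_X]
    rw [wdz1_mul (differentiableAt_eval_comp hF p) (hF j), hp]
    simp [add_mul, Finset.sum_add_distrib, Finset.sum_mul, Pi.single_apply, apply_ite, ite_mul]
    rw [add_comm]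
    exact congrArg₂ _ rfl (Finset.sum_congr rfl fun i _ => by ring)

end PolynomialChainRule

def relCoords (c w : ℂ) : Fin 2 → ℂ := ![w - c, conj (w - c)]

theorem differentiableAt_relCoords (c y : ℂ) (i : Fin 2) :
    DifferentiableAt ℝ (fun w => relCoords c w i) y := by
  fin_cases i
  · exact differentiableAt_id.sub_const c
  · exact conjCLE.differentiableAt.comp y (differentiableAt_id.sub_const c)

theorem wdz1_eval_relCoords (c : ℂ) (q : MvPolynomial (Fin 2) ℂ) (y : ℂ) :
    wdz1 (fun w => eval (relCoords c w) q) y = eval (relCoords c y) (pderiv 0 q) := by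
  rw [wdz1_eval_comp (differentiableAt_relCoords c y), Fin.sum_univ_two]
  simp only [relCoords, Matrix.cons_val_zero, Matrix.cons_val_one, wdz1_sub_const,
    wdz1_conj_sub_const]
  ring

theorem differentiableAt_eval_relCoords (c : ℂ) (q : MvPolynomial (Fin 2) ℂ) (y : ℂ) :
    DifferentiableAt ℝ (fun w => eval (relCoords c w) q) y :=
  differentiableAt_eval_comp (differentiableAt_relCoords c y) q

/-- `|w|² + |c|² - 2 w c̄ = u ū + c ū - c̄ u` with `u = w - c`. -/
def berg1Exponent (a : ℝ) (c : ℂ) : MvPolynomial (Fin 2) ℂ :=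
  C (-(a : ℂ) / 4) * (X 0 * X 1 + C c * X 1 - C (conj c) * X 0)

theorem ofReal_norm_sq_eq_mul_conj (w : ℂ) : ((‖w‖ ^ 2 : ℝ) : ℂ) = w * conj w := by
  rw [Complex.sq_norm, Complex.mul_conj]

theorem berg1_eq_exp (a : ℝ) (c w : ℂ) :
    berg1 a w c
      = ((a / (2 * Real.pi) : ℝ) : ℂ) * exp (eval (relCoords c w) (berg1Exponent a c)) := by
  simp only [berg1, ofReal_norm_sq_eq_mul_conj]
  congr 2
  simp [berg1Exponent, relCoords]
  ring

theorem differentiableAt_berg1 (a : ℝ) (c y : ℂ) :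
    DifferentiableAt ℝ (fun w => berg1 a w c) y := by
  simp only [berg1_eq_exp]
  exact ((differentiableAt_eval_relCoords c _ y).cexp).const_mul _

theorem wdz1_berg1 (a : ℝ) (c y : ℂ) :
    wdz1 (fun w => berg1 a w c) y = -(a / 4 : ℂ) * (conj (y - c) - conj c) * berg1 a y c := by
  simp only [berg1_eq_exp]
  rw [wdz1_comp (h := fun x => ((a / (2 * Real.pi) : ℝ) : ℂ) * exp x)
    (differentiable_exp.differentiableAt.const_mul _)
    (differentiableAt_eval_relCoords c _ y), wdz1_eval_relCoords]
  simp [berg1Exponent, relCoords]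
  ring

def bPoly (a : ℂ) : Module.End ℂ (MvPolynomial (Fin 2) ℂ) :=
  a • LinearMap.mulLeft ℂ (X 1) + (-2 : ℂ) • (pderiv 0).toLinearMap

theorem opb1_eval_mul_berg1 (a : ℝ) (c : ℂ) (q : MvPolynomial (Fin 2) ℂ) :
    opb1 a (fun w => eval (relCoords c w) q * berg1 a w c)
      = fun w => eval (relCoords c w) (bPoly a q) * berg1 a w c := by
  funext y
  rw [opb1, wdz1_mul (differentiableAt_eval_relCoords c q y)
    (differentiableAt_berg1 a c y), wdz1_eval_relCoords, wdz1_berg1]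
  simp [bPoly, relCoords, smul_eq_C_mul]
  ring

theorem iterate_opb1_eval_mul_berg1 (a : ℝ) (c : ℂ) (l : ℕ) (q : MvPolynomial (Fin 2) ℂ) :
    (opb1 a)^[l] (fun w => eval (relCoords c w) q * berg1 a w c)
      = fun w => eval (relCoords c w) ((bPoly a ^ l) q) * berg1 a w c := by
  induction l generalizing q with
  | zero => rfl
  | succ l ih =>
    rw [Function.iterate_succ_apply, opb1_eval_mul_berg1, ih, pow_succ, Module.End.mul_apply]

theorem pderiv_iterate_X_pow {σ R : Type*} [CommSemiring R] (i : σ) (m k : ℕ) :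
    (pderiv i)^[k] (X i ^ m : MvPolynomial σ R) = m.descFactorial k • X i ^ (m - k) := by
  induction k with
  | zero => simp
  | succ k ih =>
    rw [Function.iterate_succ_apply', ih, map_nsmul, pderiv_pow, pderiv_X_self,
      Nat.descFactorial_succ, Nat.sub_sub, mul_comm (m - k), mul_nsmul]
    simp only [nsmul_eq_mul]
    ring

theorem commute_mulLeft_X_pderiv {σ R : Type*} [CommSemiring R] {i j : σ} (h : i ≠ j) :
    Commute (LinearMap.mulLeft R (X i : MvPolynomial σ R)) (pderiv j).toLinearMap := by
  refine LinearMap.ext fun q => ?_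
  simp [pderiv_X_of_ne h]

theorem bPoly_pow_apply_X_pow (a : ℂ) (N m : ℕ) :
    (bPoly a ^ N) (X 0 ^ m) = ∑ k ∈ Finset.range (N + 1),
      C (N.choose k * a ^ k * (-2) ^ (N - k) * m.descFactorial (N - k) : ℂ)
        * X 0 ^ (m - (N - k)) * X 1 ^ k := by
  have hcomm := ((commute_mulLeft_X_pderiv (R := ℂ) (zero_ne_one' (Fin 2)).symm).smul_left
    a).smul_right (-2 : ℂ)
  rw [bPoly, hcomm.add_pow, LinearMap.sum_apply]
  refine Finset.sum_congr rfl fun k _ => ?_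
  simp only [smul_pow, LinearMap.pow_mulLeft, Module.End.mul_apply, Module.End.natCast_apply,
    LinearMap.smul_apply, Module.End.pow_apply, map_nsmul, LinearMap.mulLeft_apply]
  simp [smul_eq_C_mul, nsmul_eq_mul, pderiv_iterate_X_pow]
  ring

theorem eval_bPoly_pow_add_apply_X_pow (a : ℂ) (m n : ℕ) (v : Fin 2 → ℂ) :
    eval v ((bPoly a ^ (m + n)) (X 0 ^ m))
      = (-2) ^ m * a ^ n * m.factorial * v 1 ^ n * laguerre n m (a * (v 0 * v 1) / 2) := by
  rw [bPoly_pow_apply_X_pow, map_sum, show m + n + 1 = n + (m + 1) by omega, Finset.sum_range_add,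
    Finset.sum_eq_zero, zero_add, laguerre, Finset.mul_sum]
  · refine Finset.sum_congr rfl fun j hj => ?_
    obtain ⟨i, rfl⟩ := Nat.exists_eq_add_of_le (Nat.lt_succ_iff.mp (Finset.mem_range.mp hj))
    have hfac := Nat.factorial_mul_descFactorial (Nat.le_add_left i j)
    simp only [Nat.add_sub_cancel] at hfac
    have hsub : j + i + n - (n + j) = i := by omega
    rw [hsub, Nat.add_sub_cancel, Nat.add_sub_cancel_left,
      Nat.choose_symm_of_eq_add (by ring : j + i + n = n + j + i), ← hfac]
    have hj0 : (j.factorial : ℂ) ≠ 0 := Nat.cast_ne_zero.mpr j.factorial_ne_zero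
    rw [show -(a * (v 0 * v 1) / 2) = a * v 0 * v 1 / (-2) by ring, div_pow, pow_add (-2 : ℂ)]
    simp only [map_mul, map_pow, eval_C, eval_X, Nat.cast_mul]
    field_simp
    ring
  · intro k hk
    have : m < m + n - k := by have := Finset.mem_range.mp hk; omega
    simp [Nat.descFactorial_eq_zero_iff_lt.mpr this]

theorem berg1_eq_conj_berg1_swap (a : ℝ) (z w : ℂ) : berg1 a z w = conj (berg1 a w z) := by
  simp only [berg1, map_mul, Complex.conj_ofReal, ← Complex.exp_conj, map_sub, map_add, map_neg,
    map_div₀, map_ofNat, Complex.conj_conj]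
  ring_nf

theorem berg1_self (a : ℝ) (z : ℂ) : berg1 a z z = berg1 a 0 0 := by
  simp only [berg1, ofReal_norm_sq_eq_mul_conj, map_zero, mul_zero]
  congr 2
  ring

theorem iterate_opbbar1_berg1 (a : ℝ) (z : ℂ) (k : ℕ) :
    (opbbar1 a)^[k] (fun w => berg1 a z w) = fun w => a ^ k * (w - z) ^ k * berg1 a z w := by
  have hconj : (fun w => berg1 a z w)
      = fun w => conj (eval (relCoords z w) (X 0 ^ 0) * berg1 a w z) := by
    funext w
    rw [berg1_eq_conj_berg1_swap, pow_zero, map_one, one_mul]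
  rw [hconj, iterate_opbbar1_conj, iterate_opb1_eval_mul_berg1]
  funext w
  have hpoly := eval_bPoly_pow_add_apply_X_pow a 0 k (relCoords z w)
  rw [zero_add] at hpoly
  beta_reduce
  rw [hpoly, berg1_eq_conj_berg1_swap a z w]
  simp [laguerre, relCoords]

theorem iterate_opb1_iterate_opbbar1_berg1 (a : ℝ) (m n : ℕ) (z z' : ℂ) :
    (opb1 a)^[m + n] (fun w => (opbbar1 a)^[m] (fun w' => berg1 a w w') z') z
      = 2 ^ m * a ^ (m + n) * m.factorial * conj (z - z') ^ n
        * laguerre n m (a * ((‖z - z'‖ ^ 2 : ℝ) : ℂ) / 2) * berg1 a z z' := by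
  have hstart : (fun w => (opbbar1 a)^[m] (fun w' => berg1 a w w') z')
      = fun w => eval (relCoords z' w) (C ((-a : ℂ) ^ m) * X 0 ^ m) * berg1 a w z' := by
    funext w
    rw [iterate_opbbar1_berg1]
    simp only [map_mul, eval_C, map_pow, eval_X, relCoords, Matrix.cons_val_zero]
    rw [← neg_sub, neg_pow, neg_pow (a : ℂ)]
    ring
  rw [hstart, iterate_opb1_eval_mul_berg1]
  beta_reduce
  rw [C_mul', map_smul, smul_eval, eval_bPoly_pow_add_apply_X_pow, ofReal_norm_sq_eq_mul_conj]
  simp only [relCoords, Matrix.cons_val_zero, Matrix.cons_val_one]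
  have hsign : (-(a : ℂ)) ^ m * (-2) ^ m = 2 ^ m * a ^ m := by rw [← mul_pow, ← mul_pow]; ring
  linear_combination (a ^ n * m.factorial * conj (z - z') ^ n
    * laguerre n m (a * ((z - z') * conj (z - z')) / 2) * berg1 a z z') * hsign

theorem one_dimensional_laguerre_identity_general
    (a : ℝ) (l l' : ℕ) (h : l' ≤ l) :
    (∀ z z' : ℂ,
      (opb1 a)^[l] (fun w => (opbbar1 a)^[l'] (fun w' => berg1 a w w') z') z
        = (2 : ℂ) ^ l' * (a : ℂ) ^ l * (Nat.factorial l' : ℂ) *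
            ((starRingEnd ℂ) z - (starRingEnd ℂ) z') ^ (l - l') *
            laguerre (l - l') l' ((a : ℂ) * ((‖z - z'‖ ^ 2 : ℝ) : ℂ) / 2) *
            berg1 a z z') ∧
    (l = l' → ∀ z : ℂ,
      (opb1 a)^[l] (fun w => (opbbar1 a)^[l'] (fun w' => berg1 a w w') z) z
        = (2 : ℂ) ^ l * (a : ℂ) ^ l * (Nat.factorial l : ℂ) * berg1 a 0 0) ∧
    (l ≠ l' → ∀ z : ℂ,
      (opb1 a)^[l] (fun w => (opbbar1 a)^[l'] (fun w' => berg1 a w w') z) z = 0) := by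
  obtain ⟨n, rfl⟩ := Nat.exists_eq_add_of_le h
  refine ⟨fun z z' => ?_, fun hl z => ?_, fun hl z => ?_⟩
  · rw [iterate_opb1_iterate_opbbar1_berg1, Nat.add_sub_cancel_left, map_sub]
  · obtain rfl : n = 0 := by omega
    rw [iterate_opb1_iterate_opbbar1_berg1, sub_self, berg1_self]
    simp [laguerre, Finset.sum_range_succ']
  · rw [iterate_opb1_iterate_opbbar1_berg1, sub_self, map_zero, zero_pow (by omega)]
    simp

theorem one_dimensional_laguerre_identity
    (a : ℝ) (ha : 0 < a) (l l' : ℕ) (h : l' ≤ l) :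
    (∀ z z' : ℂ,
      (opb1 a)^[l] (fun w => (opbbar1 a)^[l'] (fun w' => berg1 a w w') z') z
        = (2 : ℂ) ^ l' * (a : ℂ) ^ l * (Nat.factorial l' : ℂ) *
            ((starRingEnd ℂ) z - (starRingEnd ℂ) z') ^ (l - l') *
            laguerre (l - l') l' ((a : ℂ) * ((‖z - z'‖ ^ 2 : ℝ) : ℂ) / 2) *
            berg1 a z z') ∧
    (l = l' → ∀ z : ℂ,
      (opb1 a)^[l] (fun w => (opbbar1 a)^[l'] (fun w' => berg1 a w w') z) z
        = (2 : ℂ) ^ l * (a : ℂ) ^ l * (Nat.factorial l : ℂ) * berg1 a 0 0) ∧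
    (l ≠ l' → ∀ z : ℂ,
      (opb1 a)^[l] (fun w => (opbbar1 a)^[l'] (fun w' => berg1 a w w') z) z = 0) :=
  one_dimensional_laguerre_identity_general a l l' h
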